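/- arXiv:2108.13564 — 7 statements merged into one kernel-verified Lean document; each statement's English description precedes it below -/
import Mathlib

section
/- The maximum number of inversions of a meet-irreducible (bigrassmannian) permutation in S_n is ⌊n²/4⌋. -/
/-- A permutation of ℕ supported on {1,…,n}, representing an element of Sₙ. -/
def Supported (n : ℕ) (w : Equiv.Perm ℕ) : Prop :=
  ∀ i, w i ≠ i → i ∈ Finset.Icc 1 n

/-- Right descent set: i ∈ [n-1] with w(i) > w(i+1). -/
def rightDescents (n : ℕ) (w : Equiv.Perm ℕ) : Finset ℕ :=
  (Finset.Icc 1 (n - 1)).filter (fun i => w (i + 1) < w i)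

/-- Left descent set: right descents of w⁻¹. -/
def leftDescents (n : ℕ) (w : Equiv.Perm ℕ) : Finset ℕ :=
  rightDescents n w⁻¹

/-- Inversions: pairs (i,j), 1 ≤ i < j ≤ n, with w(i) > w(j). -/
def inversions (n : ℕ) (w : Equiv.Perm ℕ) : Finset (ℕ × ℕ) :=
  ((Finset.Icc 1 n) ×ˢ (Finset.Icc 1 n)).filter (fun p => p.1 < p.2 ∧ w p.2 < w p.1)

/-- Number of inversions. -/
def ell (n : ℕ) (w : Equiv.Perm ℕ) : ℕ := (inversions n w).card

/-- Meet-irreducible (bigrassmannian): exactly one left and one right descent. -/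
def Bigrassmannian (n : ℕ) (w : Equiv.Perm ℕ) : Prop :=
  (leftDescents n w).card = 1 ∧ (rightDescents n w).card = 1


/-! A permutation with a single right descent `r` is increasing on `[1, r]` and on `[r + 1, n]`, so
each of its inversions pairs a position of the first block with one of the second; hence it has at
most `r (n - r) ≤ ⌊n² / 4⌋` inversions. The bound is attained by the permutation
`n - m + 1, …, n, 1, …, n - m` with `m = ⌊n / 2⌋`, which has its only right descent at `m`, its
only left descent at `n - m`, and exactly the inversions `[1, m] × [m + 1, n]`. -/

open Finset

lemma Nat.mul_sub_le_sq_div_four (r n : ℕ) : r * (n - r) ≤ n ^ 2 / 4 := by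
  rw [Nat.le_div_iff_mul_le four_pos]
  rcases le_total r n with h | h
  · obtain ⟨s, rfl⟩ := Nat.exists_eq_add_of_le h
    rw [Nat.add_sub_cancel_left]
    nlinarith [sq_nonneg ((r : ℤ) - s)]
  · simp [Nat.sub_eq_zero_of_le h]

lemma Nat.div_two_mul_sub_div_two (n : ℕ) : n / 2 * (n - n / 2) = n ^ 2 / 4 := by
  obtain ⟨m, rfl | rfl⟩ := Nat.even_or_odd' n
  · rw [show (2 * m) ^ 2 = 4 * (m * m) by ring, show 2 * m / 2 = m by omega,
      show 2 * m - m = m by omega]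
    omega
  · rw [show (2 * m + 1) ^ 2 = 4 * (m * (m + 1)) + 1 by ring, show (2 * m + 1) / 2 = m by omega,
      show 2 * m + 1 - m = m + 1 by omega]
    omega

lemma card_Icc_one_product_Icc_succ (r n : ℕ) :
    #(Icc 1 r ×ˢ Icc (r + 1) n) = r * (n - r) := by
  rw [card_product, Nat.card_Icc, Nat.card_Icc]
  congr 1
  omega

lemma lt_of_forall_lt_succ {f : ℕ → ℕ} {a b : ℕ} (hab : a < b)
    (h : ∀ k, a ≤ k → k < b → f k < f (k + 1)) : f a < f b := by
  induction b, hab using Nat.le_induction with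
  | base => exact h a le_rfl a.lt_succ_self
  | succ b hab ih =>
    exact (ih fun k hk hkb => h k hk (by omega)).trans (h b (by omega) b.lt_succ_self)

section Descents

variable {n : ℕ} {w : Equiv.Perm ℕ}

lemma lt_succ_of_notMem_rightDescents {i : ℕ} (hi : 1 ≤ i) (hin : i < n)
    (h : i ∉ rightDescents n w) : w i < w (i + 1) := by
  simp only [rightDescents, mem_filter, mem_Icc, not_and, not_lt] at h
  exact (h ⟨hi, by omega⟩).lt_of_ne (w.injective.ne (by omega))

lemma inversions_subset_of_rightDescents_subset {r : ℕ} (h : rightDescents n w ⊆ {r}) :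
    inversions n w ⊆ Icc 1 r ×ˢ Icc (r + 1) n := by
  rintro ⟨i, j⟩ hij
  simp only [inversions, mem_filter, mem_product, mem_Icc] at hij ⊢
  obtain ⟨⟨⟨hi, -⟩, -, hj⟩, hlt, hinv⟩ := hij
  by_contra hblock
  have hincr : w i < w j := lt_of_forall_lt_succ hlt fun k hik hkj =>
    lt_succ_of_notMem_rightDescents (n := n) (by omega) (by omega)
      fun hk => by have := mem_singleton.mp (h hk); omega
  omega

lemma ell_le_of_rightDescents_subset {r : ℕ} (h : rightDescents n w ⊆ {r}) :
    ell n w ≤ r * (n - r) :=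
  card_Icc_one_product_Icc_succ r n ▸ card_le_card (inversions_subset_of_rightDescents_subset h)

end Descents

def blockSwapFun (n m i : ℕ) : ℕ :=
  if 1 ≤ i ∧ i ≤ m then i + (n - m) else if m < i ∧ i ≤ n then i - m else i

def blockSwap (n m : ℕ) : Equiv.Perm ℕ where
  toFun := blockSwapFun n m
  invFun := blockSwapFun n (n - m)
  left_inv i := by unfold blockSwapFun; split_ifs <;> omega
  right_inv i := by unfold blockSwapFun; split_ifs <;> omega

section BlockSwap

variable (n m : ℕ)

lemma blockSwap_apply (i : ℕ) : blockSwap n m i = blockSwapFun n m i := rfl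

lemma blockSwap_inv : (blockSwap n m)⁻¹ = blockSwap n (n - m) :=
  Equiv.ext fun _ => rfl

lemma supported_blockSwap : Supported n (blockSwap n m) := by
  intro i hi
  rw [blockSwap_apply, blockSwapFun] at hi
  rw [mem_Icc]
  split_ifs at hi <;> omega

variable {n m} in
lemma rightDescents_blockSwap (hm : 1 ≤ m) (hmn : m < n) :
    rightDescents n (blockSwap n m) = {m} := by
  ext i
  simp only [rightDescents, mem_filter]
  simp only [mem_Icc, mem_singleton, blockSwap_apply, blockSwapFun]
  split_ifs <;> omega

variable {n m} in
lemma bigrassmannian_blockSwap (hm : 1 ≤ m) (hmn : m < n) :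
    Bigrassmannian n (blockSwap n m) := by
  rw [Bigrassmannian, leftDescents, blockSwap_inv, rightDescents_blockSwap hm hmn,
    rightDescents_blockSwap (by omega) (by omega)]
  exact ⟨card_singleton _, card_singleton _⟩

lemma inversions_blockSwap : inversions n (blockSwap n m) = Icc 1 m ×ˢ Icc (m + 1) n := by
  ext ⟨i, j⟩
  simp only [inversions, mem_filter]
  simp only [mem_product, mem_Icc, blockSwap_apply, blockSwapFun]
  split_ifs <;> omega

lemma ell_blockSwap : ell n (blockSwap n m) = m * (n - m) := by
  rw [ell, inversions_blockSwap, card_Icc_one_product_Icc_succ]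

end BlockSwap

/-- The maximum number of inversions of a meet-irreducible (bigrassmannian)
permutation in Sₙ is ⌊n²/4⌋. -/
theorem max_inversions_bigrassmannian (n : ℕ) (hn : 2 ≤ n) :
    (∀ w : Equiv.Perm ℕ, Supported n w → Bigrassmannian n w → ell n w ≤ n ^ 2 / 4) ∧
    (∃ w : Equiv.Perm ℕ, Supported n w ∧ Bigrassmannian n w ∧ ell n w = n ^ 2 / 4) := by
  refine ⟨fun w _ hw => ?_, ?_⟩
  · obtain ⟨r, hr⟩ := card_eq_one.mp hw.2
    exact (ell_le_of_rightDescents_subset hr.subset).trans (Nat.mul_sub_le_sq_div_four r n)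
  · refine ⟨blockSwap n (n / 2), supported_blockSwap n _,
      bigrassmannian_blockSwap (by omega) (by omega), ?_⟩
    rw [ell_blockSwap, Nat.div_two_mul_sub_div_two]
end

section
/- A permutation w ∈ S_n has exactly one left descent and exactly one right descent if and only if there exist nonnegative integers i₁, i₂, i₃, i₄ with i₂ ≥ 1, i₃ ≥ 1, i₁ + i₂ + i₃ + i₄ = n, such that w(i) = i for 1 ≤ i ≤ i₁, w(i) = i + i₃ for i₁+1 ≤ i ≤ i₁+i₂, w(i) = i − i₂ for i₁+i₂+1 ≤ i ≤ i₁+i₂+i₃, and w(i) = i for i₁+i₂+i₃+1 ≤ i ≤ n. -/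
open Finset

section StrictMonoOn

variable {f : ℕ → ℕ} {p q : ℕ}

theorem StrictMonoOn.add_le_apply_add (hf : StrictMonoOn f (Set.Icc p q)) {i k : ℕ}
    (hi : p ≤ i) (hk : i + k ≤ q) : f i + k ≤ f (i + k) := by
  induction k with
  | zero => rfl
  | succ k ih =>
    have hstep : f (i + k) < f (i + (k + 1)) :=
      hf ⟨by omega, by omega⟩ ⟨by omega, hk⟩ (by omega)
    have := ih (by omega)
    omega

theorem StrictMonoOn.apply_add_eq_of_apply_add_le (hf : StrictMonoOn f (Set.Icc p q))
    {i j k : ℕ} (hi : p ≤ i) (hk : i + k ≤ q) (htop : f (i + k) ≤ f i + k) (hj : j ≤ k) :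
    f (i + j) = f i + j := by
  have hlow := hf.add_le_apply_add hi (show i + j ≤ q by omega)
  have hhigh := hf.add_le_apply_add (i := i + j) (k := k - j) (by omega) (by omega)
  rw [show i + j + (k - j) = i + k by omega] at hhigh
  omega

end StrictMonoOn

namespace Supported

variable {n : ℕ} {w : Equiv.Perm ℕ}

theorem apply_mem_Icc (hw : Supported n w) {i : ℕ} (hi : i ∈ Set.Icc 1 n) :
    w i ∈ Set.Icc 1 n := by
  by_cases h : w i = i
  · rwa [h]
  · simpa using hw (w i) fun h' => h (w.injective h')

theorem inv (hw : Supported n w) : Supported n w⁻¹ := fun i hi =>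
  hw i fun h => hi (by rw [Equiv.Perm.inv_eq_iff_eq, h])

end Supported

section Grassmannian

variable {n a b : ℕ} {u : Equiv.Perm ℕ}

theorem mem_rightDescents {i : ℕ} :
    i ∈ rightDescents n u ↔ 1 ≤ i ∧ i + 1 ≤ n ∧ u (i + 1) < u i := by
  simp only [rightDescents, mem_filter, mem_Icc]
  omega

theorem descent_of_rightDescents_eq_singleton (ha : rightDescents n u = {a}) :
    1 ≤ a ∧ a + 1 ≤ n ∧ u (a + 1) < u a :=
  mem_rightDescents.mp (ha ▸ mem_singleton_self a)

theorem apply_lt_apply_succ_of_ne_descent (ha : rightDescents n u = {a}) {i : ℕ} (hi : 1 ≤ i)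
    (hin : i + 1 ≤ n) (hia : i ≠ a) : u i < u (i + 1) := by
  have hnot : i ∉ rightDescents n u := by simp [ha, hia]
  rw [mem_rightDescents] at hnot
  have hne : u i ≠ u (i + 1) := u.injective.ne (by omega)
  omega

theorem strictMonoOn_Icc_one_descent (ha : rightDescents n u = {a}) :
    StrictMonoOn u (Set.Icc 1 a) :=
  strictMonoOn_of_lt_succ Set.ordConnected_Icc fun i _ hi hsi => by
    simp only [Order.succ_eq_add_one, Set.mem_Icc] at hi hsi
    have := descent_of_rightDescents_eq_singleton ha
    exact apply_lt_apply_succ_of_ne_descent ha hi.1 (by omega) (by omega)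

theorem strictMonoOn_Icc_descent_succ (ha : rightDescents n u = {a}) :
    StrictMonoOn u (Set.Icc (a + 1) n) :=
  strictMonoOn_of_lt_succ Set.ordConnected_Icc fun i _ hi hsi => by
    simp only [Order.succ_eq_add_one, Set.mem_Icc] at hi hsi
    exact apply_lt_apply_succ_of_ne_descent ha (by omega) hsi.2 (by omega)

theorem le_apply_of_le_descent (hu : Supported n u) (ha : rightDescents n u = {a}) {i : ℕ}
    (hi : 1 ≤ i) (hia : i ≤ a) : i ≤ u i := by
  have := descent_of_rightDescents_eq_singleton ha
  have hu1 := (hu.apply_mem_Icc (i := 1) ⟨le_rfl, by omega⟩).1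
  have hmono := (strictMonoOn_Icc_one_descent ha).add_le_apply_add (i := 1) (k := i - 1)
    le_rfl (by omega)
  rw [show 1 + (i - 1) = i by omega] at hmono
  omega

theorem apply_le_of_descent_lt (hu : Supported n u) (ha : rightDescents n u = {a}) {i : ℕ}
    (hai : a < i) (hin : i ≤ n) : u i ≤ i := by
  have hun := (hu.apply_mem_Icc (i := n) ⟨by omega, le_rfl⟩).2
  have hmono := (strictMonoOn_Icc_descent_succ ha).add_le_apply_add (i := i) (k := n - i)
    hai (by omega)
  rw [show i + (n - i) = n by omega] at hmono
  omega

/-- Both `u` and `u⁻¹` move points of their first increasing runs upwards. -/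
theorem apply_eq_self_of_le_descent_of_apply_le_inv_descent (hu : Supported n u)
    (ha : rightDescents n u = {a}) (hb : rightDescents n u⁻¹ = {b}) {i : ℕ} (hi : 1 ≤ i)
    (hia : i ≤ a) (hib : u i ≤ b) : u i = i := by
  have := descent_of_rightDescents_eq_singleton ha
  have hinv := le_apply_of_le_descent hu.inv hb (hu.apply_mem_Icc ⟨hi, by omega⟩).1 hib
  rw [show u⁻¹ (u i) = i from u.symm_apply_apply i] at hinv
  exact le_antisymm hinv (le_apply_of_le_descent hu ha hi hia)

/-- Both `u` and `u⁻¹` move points of their second increasing runs downwards. -/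
theorem apply_eq_self_of_descent_lt_of_inv_descent_lt_apply (hu : Supported n u)
    (ha : rightDescents n u = {a}) (hb : rightDescents n u⁻¹ = {b}) {i : ℕ} (hai : a < i)
    (hin : i ≤ n) (hbi : b < u i) : u i = i := by
  have hinv := apply_le_of_descent_lt hu.inv hb hbi (hu.apply_mem_Icc ⟨by omega, hin⟩).2
  rw [show u⁻¹ (u i) = i from u.symm_apply_apply i] at hinv
  exact le_antisymm (apply_le_of_descent_lt hu ha hai hin) hinv

theorem descent_lt_inv_apply_inv_descent (hu : Supported n u) (ha : rightDescents n u = {a})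
    (hb : rightDescents n u⁻¹ = {b}) : a < u⁻¹ b := by
  obtain ⟨hb1, hbn, hdesc⟩ := descent_of_rightDescents_eq_singleton hb
  by_contra! h
  have hsucc := hu.inv.apply_mem_Icc (i := b + 1) ⟨by omega, hbn⟩
  have := strictMonoOn_Icc_one_descent ha ⟨hsucc.1, by omega⟩ ⟨by omega, h⟩ hdesc
  rw [show u (u⁻¹ (b + 1)) = b + 1 from u.apply_symm_apply _,
    show u (u⁻¹ b) = b from u.apply_symm_apply _] at this
  omega

theorem inv_apply_inv_descent_le (hu : Supported n u) (hb : rightDescents n u⁻¹ = {b}) :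
    u⁻¹ b ≤ n := by
  have := descent_of_rightDescents_eq_singleton hb
  exact (hu.inv.apply_mem_Icc ⟨this.1, by omega⟩).2

theorem apply_descent_succ_le_inv_descent (hu : Supported n u) (ha : rightDescents n u = {a})
    (hb : rightDescents n u⁻¹ = {b}) : u (a + 1) ≤ b := by
  have hlt := descent_lt_inv_apply_inv_descent hu ha hb
  have hbn := inv_apply_inv_descent_le hu hb
  have := (strictMonoOn_Icc_descent_succ ha).monotoneOn ⟨le_rfl, by omega⟩ ⟨hlt, hbn⟩ hlt
  rwa [show u (u⁻¹ b) = b from u.apply_symm_apply _] at this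

/-- The values below `u (a + 1)`, the least value of the second run of `u`, are taken on the
first run, where `apply_eq_self_of_le_descent_of_apply_le_inv_descent` applies. -/
theorem apply_eq_self_of_lt_apply_descent_succ (hu : Supported n u)
    (ha : rightDescents n u = {a}) (hb : rightDescents n u⁻¹ = {b}) {v : ℕ} (hv : 1 ≤ v)
    (hva : v < u (a + 1)) : u v = v := by
  have hbn := (descent_of_rightDescents_eq_singleton hb).2.1
  have hmb := apply_descent_succ_le_inv_descent hu ha hb
  obtain ⟨hi1, hin⟩ := hu.inv.apply_mem_Icc (i := v) ⟨hv, by omega⟩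
  have hvi : u (u⁻¹ v) = v := u.apply_symm_apply v
  have hia : u⁻¹ v ≤ a := by
    by_contra! h
    have := (strictMonoOn_Icc_descent_succ ha).monotoneOn ⟨le_rfl, by omega⟩ ⟨h, hin⟩ h
    omega
  have hfix := apply_eq_self_of_le_descent_of_apply_le_inv_descent hu ha hb hi1 hia (by omega)
  rw [hvi] at hfix
  nth_rewrite 1 [hfix]
  exact hvi

theorem apply_descent_succ_le_descent (hu : Supported n u) (ha : rightDescents n u = {a})
    (hb : rightDescents n u⁻¹ = {b}) : u (a + 1) ≤ a := by
  obtain ⟨ha1, -, hdesc⟩ := descent_of_rightDescents_eq_singleton ha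
  by_contra! h
  have := apply_eq_self_of_lt_apply_descent_succ hu ha hb ha1 (by omega)
  omega

/-- `u` is increasing on `[a + 1, u⁻¹ b]` and `u⁻¹` on `[u (a + 1), b]`; each bounds the
length of one interval by that of the other. -/
theorem inv_apply_inv_descent_eq (hu : Supported n u) (ha : rightDescents n u = {a})
    (hb : rightDescents n u⁻¹ = {b}) : u⁻¹ b = a + 1 + (b - u (a + 1)) := by
  have hlt := descent_lt_inv_apply_inv_descent hu ha hb
  have hmb := apply_descent_succ_le_inv_descent hu ha hb
  have hbn := inv_apply_inv_descent_le hu hb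
  have hm1 := (hu.apply_mem_Icc (i := a + 1)
    ⟨by omega, (descent_of_rightDescents_eq_singleton ha).2.1⟩).1
  have hu' := (strictMonoOn_Icc_descent_succ ha).add_le_apply_add (i := a + 1)
    (k := u⁻¹ b - (a + 1)) le_rfl (by omega)
  have hinv := (strictMonoOn_Icc_one_descent hb).add_le_apply_add (i := u (a + 1))
    (k := b - u (a + 1)) hm1 (by omega)
  rw [show a + 1 + (u⁻¹ b - (a + 1)) = u⁻¹ b by omega,
    show u (u⁻¹ b) = b from u.apply_symm_apply _] at hu'
  rw [show u (a + 1) + (b - u (a + 1)) = b by omega,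
    show u⁻¹ (u (a + 1)) = a + 1 from u.symm_apply_apply _] at hinv
  omega

theorem apply_descent_succ_add (hu : Supported n u) (ha : rightDescents n u = {a})
    (hb : rightDescents n u⁻¹ = {b}) {j : ℕ} (hj : j ≤ b - u (a + 1)) :
    u (a + 1 + j) = u (a + 1) + j := by
  have hinv := inv_apply_inv_descent_eq hu ha hb
  have hbn := inv_apply_inv_descent_le hu hb
  refine (strictMonoOn_Icc_descent_succ ha).apply_add_eq_of_apply_add_le le_rfl
    (k := b - u (a + 1)) (by omega) ?_ hj
  rw [← hinv, show u (u⁻¹ b) = b from u.apply_symm_apply b]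
  omega

theorem apply_eq_self_of_inv_apply_inv_descent_lt (hu : Supported n u)
    (ha : rightDescents n u = {a}) (hb : rightDescents n u⁻¹ = {b}) {i : ℕ} (hi : u⁻¹ b < i)
    (hin : i ≤ n) : u i = i := by
  have hlt := descent_lt_inv_apply_inv_descent hu ha hb
  refine apply_eq_self_of_descent_lt_of_inv_descent_lt_apply hu ha hb (by omega) hin ?_
  have := strictMonoOn_Icc_descent_succ ha ⟨hlt, by omega⟩ ⟨by omega, hin⟩ hi
  rwa [show u (u⁻¹ b) = b from u.apply_symm_apply _] at this

/-- If `u (a + 1) < u⁻¹ (b + 1)` then `u⁻¹` would fix `u (a + 1)`, which it sends to `a + 1`;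
symmetrically for the other strict inequality. -/
theorem apply_descent_succ_eq_inv_apply_inv_descent_succ (hu : Supported n u)
    (ha : rightDescents n u = {a}) (hb : rightDescents n u⁻¹ = {b}) :
    u (a + 1) = u⁻¹ (b + 1) := by
  have ha' : rightDescents n u⁻¹⁻¹ = {a} := by rwa [inv_inv]
  have hma := apply_descent_succ_le_descent hu ha hb
  have hmb := apply_descent_succ_le_descent hu.inv hb ha'
  have hm1 := (hu.apply_mem_Icc (i := a + 1)
    ⟨by omega, (descent_of_rightDescents_eq_singleton ha).2.1⟩).1
  have hm1' := (hu.inv.apply_mem_Icc (i := b + 1)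
    ⟨by omega, (descent_of_rightDescents_eq_singleton hb).2.1⟩).1
  rcases lt_trichotomy (u (a + 1)) (u⁻¹ (b + 1)) with h | h | h
  · have := apply_eq_self_of_lt_apply_descent_succ hu.inv hb ha' hm1 h
    rw [show u⁻¹ (u (a + 1)) = a + 1 from u.symm_apply_apply _] at this
    omega
  · exact h
  · have := apply_eq_self_of_lt_apply_descent_succ hu ha hb hm1' h
    rw [show u (u⁻¹ (b + 1)) = b + 1 from u.apply_symm_apply _] at this
    omega

end Grassmannian

section BlockInterchange

variable {n i1 i2 i3 : ℕ} {w : Equiv.Perm ℕ}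

def IsBlockInterchange (n i1 i2 i3 : ℕ) (w : Equiv.Perm ℕ) : Prop :=
  (∀ i, 1 ≤ i → i ≤ i1 → w i = i) ∧
  (∀ i, i1 + 1 ≤ i → i ≤ i1 + i2 → w i = i + i3) ∧
  (∀ i, i1 + i2 + 1 ≤ i → i ≤ i1 + i2 + i3 → w i = i - i2) ∧
  (∀ i, i1 + i2 + i3 + 1 ≤ i → i ≤ n → w i = i)

theorem IsBlockInterchange.inv (h : IsBlockInterchange n i1 i2 i3 w) :
    IsBlockInterchange n i1 i3 i2 w⁻¹ := by
  obtain ⟨h1, h2, h3, h4⟩ := h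
  refine ⟨fun i hi hi' => ?_, fun i hi hi' => ?_, fun i hi hi' => ?_, fun i hi hi' => ?_⟩ <;>
    rw [Equiv.Perm.inv_eq_iff_eq]
  · exact (h1 i hi hi').symm
  · rw [h3 (i + i2) (by omega) (by omega)]
    omega
  · rw [h2 (i - i3) (by omega) (by omega)]
    omega
  · exact (h4 i (by omega) hi').symm

theorem IsBlockInterchange.apply_eq (h : IsBlockInterchange n i1 i2 i3 w) {i : ℕ} (hi : 1 ≤ i)
    (hin : i ≤ n) :
    w i = if i ≤ i1 then i else if i ≤ i1 + i2 then i + i3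
      else if i ≤ i1 + i2 + i3 then i - i2 else i := by
  obtain ⟨h1, h2, h3, h4⟩ := h
  split_ifs <;> first
    | exact h1 i hi ‹_› | exact h2 i (by omega) ‹_› | exact h3 i (by omega) ‹_›
    | exact h4 i (by omega) hin

theorem IsBlockInterchange.rightDescents_eq (h : IsBlockInterchange n i1 i2 i3 w)
    (h2 : 1 ≤ i2) (h3 : 1 ≤ i3) (hn : i1 + i2 + i3 ≤ n) : rightDescents n w = {i1 + i2} := by
  ext i
  rw [mem_rightDescents, mem_singleton]
  by_cases hi : 1 ≤ i ∧ i + 1 ≤ n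
  · rw [h.apply_eq hi.1 (by omega), h.apply_eq (by omega) hi.2]
    split_ifs <;> omega
  · omega

end BlockInterchange

/-- With `m = w (d + 1)`, the blocks are `[1, m - 1]`, `[m, d]`, `[d + 1, w⁻¹ e]` and
`(w⁻¹ e, n]`: the third is read off from `w`, the second from `w⁻¹`. -/
theorem isBlockInterchange_of_rightDescents_eq_singleton {n d e : ℕ} {w : Equiv.Perm ℕ}
    (hw : Supported n w) (hd : rightDescents n w = {d}) (he : rightDescents n w⁻¹ = {e}) :
    ∃ i1 i2 i3, 1 ≤ i2 ∧ 1 ≤ i3 ∧ i1 + i2 + i3 ≤ n ∧ IsBlockInterchange n i1 i2 i3 w := by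
  have hd' : rightDescents n w⁻¹⁻¹ = {d} := by rwa [inv_inv]
  have hm1 := (hw.apply_mem_Icc (i := d + 1)
    ⟨by omega, (descent_of_rightDescents_eq_singleton hd).2.1⟩).1
  have hmd := apply_descent_succ_le_descent hw hd he
  have hme := apply_descent_succ_le_inv_descent hw hd he
  have hwe := inv_apply_inv_descent_eq hw hd he
  have hen := inv_apply_inv_descent_le hw he
  have hm := apply_descent_succ_eq_inv_apply_inv_descent_succ hw hd he
  refine ⟨w (d + 1) - 1, d + 1 - w (d + 1), e + 1 - w (d + 1), by omega, by omega, by omega,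
    fun i hi hi' => apply_eq_self_of_lt_apply_descent_succ hw hd he hi (by omega),
    fun i hi hi' => ?_, fun i hi hi' => ?_,
    fun i hi hi' => apply_eq_self_of_inv_apply_inv_descent_lt hw hd he (by omega) hi'⟩
  · have := apply_descent_succ_add hw.inv he hd' (j := i - w (d + 1)) (by rw [← hm]; omega)
    rw [← hm, show w (d + 1) + (i - w (d + 1)) = i by omega, Equiv.Perm.inv_eq_iff_eq] at this
    omega
  · have := apply_descent_succ_add hw hd he (j := i - (d + 1)) (by omega)
    rw [show d + 1 + (i - (d + 1)) = i by omega] at this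
    omega

/-- A permutation w ∈ Sₙ has exactly one left descent and exactly one right
descent iff it is a "block interchange" permutation w(i₁,i₂,i₃,i₄). -/
theorem bigrassmannian_iff_block (n : ℕ) (w : Equiv.Perm ℕ) (hw : Supported n w) :
    ((leftDescents n w).card = 1 ∧ (rightDescents n w).card = 1) ↔
    ∃ i1 i2 i3 i4 : ℕ, 1 ≤ i2 ∧ 1 ≤ i3 ∧ i1 + i2 + i3 + i4 = n ∧
      (∀ i, 1 ≤ i → i ≤ i1 → w i = i) ∧
      (∀ i, i1 + 1 ≤ i → i ≤ i1 + i2 → w i = i + i3) ∧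
      (∀ i, i1 + i2 + 1 ≤ i → i ≤ i1 + i2 + i3 → w i = i - i2) ∧
      (∀ i, i1 + i2 + i3 + 1 ≤ i → i ≤ n → w i = i) := by
  constructor
  · rintro ⟨hL, hR⟩
    obtain ⟨e, he⟩ := card_eq_one.mp hL
    obtain ⟨d, hd⟩ := card_eq_one.mp hR
    obtain ⟨i1, i2, i3, h2, h3, hn, hB⟩ :=
      isBlockInterchange_of_rightDescents_eq_singleton hw hd he
    exact ⟨i1, i2, i3, n - (i1 + i2 + i3), h2, h3, by omega, hB⟩
  · rintro ⟨i1, i2, i3, i4, h2, h3, hn, hB⟩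
    have hB : IsBlockInterchange n i1 i2 i3 w := hB
    rw [leftDescents, hB.inv.rightDescents_eq h3 h2 (by omega),
      hB.rightDescents_eq h2 h3 (by omega)]
    simp
end

section
/- If Q is a meet-irreducible irreducible discrete quasi-copula on L_n (n ≥ 2), then its Kendall's τ satisfies −1/(n−1) ≤ τ(Q) ≤ 1. -/
/-- Kendall's τ of the discrete copula Q(w). -/
noncomputable def tau (n : ℕ) (w : Equiv.Perm ℕ) : ℝ :=
  1 - 2 * (ell n w : ℝ) / ((n : ℝ) * ((n : ℝ) - 1) / 2)

/-!
A permutation with a single right descent `b` is increasing on `[1, b]` and on `[b + 1, n]`,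
so each of its inversions pairs a position of the first block with one of the second. Hence
`ℓ(w) ≤ b (n - b) ≤ n² / 4`, which is exactly the lower bound `τ ≥ -1/(n - 1)`; the upper bound
`τ ≤ 1` is just `ℓ(w) ≥ 0`.
-/

lemma monotoneOn_Icc_of_forall_notMem_rightDescents {n a c : ℕ} {w : Equiv.Perm ℕ}
    (ha : 1 ≤ a) (hc : c ≤ n) (h : ∀ k, a ≤ k → k < c → k ∉ rightDescents n w) :
    MonotoneOn w (Set.Icc a c) := by
  refine monotoneOn_of_le_add_one Set.ordConnected_Icc fun k _ hk hk1 => ?_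
  have hkn : k ∈ Finset.Icc 1 (n - 1) := by
    simp only [Set.mem_Icc, Finset.mem_Icc] at hk hk1 ⊢
    omega
  simpa [rightDescents, hkn] using h k hk.1 (by simp only [Set.mem_Icc] at hk1; omega)

lemma inversions_subset_of_rightDescents_eq_singleton {n b : ℕ} {w : Equiv.Perm ℕ}
    (h : rightDescents n w = {b}) :
    inversions n w ⊆ Finset.Icc 1 b ×ˢ Finset.Icc (b + 1) n := by
  have hb : ∀ k, k ≠ b → k ∉ rightDescents n w := by simp [h]
  intro ⟨i, j⟩ hij
  simp only [inversions, Finset.mem_filter, Finset.mem_product, Finset.mem_Icc] at hij ⊢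
  obtain ⟨⟨⟨hi1, hin⟩, hj1, hjn⟩, hlt, hinv⟩ := hij
  have hib : i ≤ b := by
    by_contra! hbi
    have hmono : MonotoneOn w (Set.Icc i n) :=
      monotoneOn_Icc_of_forall_notMem_rightDescents hi1 le_rfl fun k hk _ => hb k (by omega)
    exact hinv.not_ge (hmono ⟨le_rfl, hin⟩ ⟨hlt.le, hjn⟩ hlt.le)
  have hbj : b < j := by
    by_contra! hjb
    have hmono : MonotoneOn w (Set.Icc 1 j) :=
      monotoneOn_Icc_of_forall_notMem_rightDescents le_rfl hjn fun k _ hk => hb k (by omega)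
    exact hinv.not_ge (hmono ⟨hi1, hlt.le⟩ ⟨hj1, le_rfl⟩ hlt.le)
  exact ⟨⟨hi1, hib⟩, hbj, hjn⟩

lemma ell_le_of_rightDescents_eq_singleton {n b : ℕ} {w : Equiv.Perm ℕ}
    (h : rightDescents n w = {b}) : ell n w ≤ b * (n - b) := by
  calc ell n w ≤ (Finset.Icc 1 b ×ˢ Finset.Icc (b + 1) n).card :=
        Finset.card_le_card (inversions_subset_of_rightDescents_eq_singleton h)
    _ = b * (n - b) := by simp

lemma four_mul_ell_le_sq_of_card_rightDescents_eq_one {n : ℕ} {w : Equiv.Perm ℕ}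
    (h : (rightDescents n w).card = 1) : 4 * ell n w ≤ n ^ 2 := by
  obtain ⟨b, hb⟩ := Finset.card_eq_one.mp h
  have hbn : b ≤ n := by
    have hmem : b ∈ rightDescents n w := by simp [hb]
    simp only [rightDescents, Finset.mem_filter, Finset.mem_Icc] at hmem
    omega
  calc 4 * ell n w ≤ 4 * b * (n - b) := by
        rw [mul_assoc]; exact Nat.mul_le_mul_left 4 (ell_le_of_rightDescents_eq_singleton hb)
    _ ≤ (b + (n - b)) ^ 2 := four_mul_le_sq_add b (n - b)
    _ = n ^ 2 := by rw [Nat.add_sub_cancel' hbn]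

lemma tau_le_one (n : ℕ) (w : Equiv.Perm ℕ) : tau n w ≤ 1 := by
  have hden : 0 ≤ (n : ℝ) * ((n : ℝ) - 1) / 2 := by
    rcases n with _ | n
    · simp
    · rw [Nat.cast_succ, add_sub_cancel_right]; positivity
  have : 0 ≤ 2 * (ell n w : ℝ) / ((n : ℝ) * ((n : ℝ) - 1) / 2) := by positivity
  unfold tau
  linarith

lemma neg_inv_sub_one_le_tau {n : ℕ} {w : Equiv.Perm ℕ} (hn : 2 ≤ n)
    (h : 4 * ell n w ≤ n ^ 2) : -(1 / ((n : ℝ) - 1)) ≤ tau n w := by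
  have hn' : (1 : ℝ) < n := by exact_mod_cast hn
  have h' : 4 * (ell n w : ℝ) ≤ (n : ℝ) ^ 2 := by exact_mod_cast h
  have hsub : (0 : ℝ) < n - 1 := by linarith
  unfold tau
  rw [neg_le_sub_iff_le_add, div_le_iff₀ (by positivity)]
  calc 2 * (ell n w : ℝ) ≤ n ^ 2 / 2 := by linarith
    _ = (1 + 1 / (n - 1)) * (n * (n - 1) / 2) := by field_simp; ring

theorem tau_bigrassmannian_bounds_general (n : ℕ) (hn : 2 ≤ n) (w : Equiv.Perm ℕ)
    (hb : Bigrassmannian n w) :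
    -(1 / ((n : ℝ) - 1)) ≤ tau n w ∧ tau n w ≤ 1 :=
  ⟨neg_inv_sub_one_le_tau hn (four_mul_ell_le_sq_of_card_rightDescents_eq_one hb.2),
    tau_le_one n w⟩

/-- If Q is a meet-irreducible irreducible discrete copula on Lₙ (n ≥ 2), then
−1/(n−1) ≤ τ(Q) ≤ 1. -/
theorem tau_bigrassmannian_bounds (n : ℕ) (hn : 2 ≤ n) (w : Equiv.Perm ℕ)
    (hw : Supported n w) (hb : Bigrassmannian n w) :
    -(1 / ((n : ℝ) - 1)) ≤ tau n w ∧ tau n w ≤ 1 :=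
  tau_bigrassmannian_bounds_general n hn w hb
end

section
/- The pointwise minimum of two irreducible discrete quasi-copulas on L_n is again an irreducible discrete quasi-copula, and it is the meet of the two in the entrywise (concordance) order. -/
/-- An irreducible discrete quasi-copula on Lₙ = {0,…,n}: boundary conditions
Q(i,0)=Q(0,i)=0, Q(i,n)=Q(n,i)=i, and consecutive differences in each row and
column lie in {0,1}.  (Values at arguments outside {0,…,n} are irrelevant.) -/
def IsQuasiCopula (n : ℕ) (Q : ℕ → ℕ → ℤ) : Prop :=
  (∀ i ≤ n, Q i 0 = 0 ∧ Q 0 i = 0 ∧ Q i n = i ∧ Q n i = i) ∧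
  (∀ i, 1 ≤ i → i ≤ n → ∀ j, 1 ≤ j → j ≤ n →
    (Q i j - Q (i - 1) j = 0 ∨ Q i j - Q (i - 1) j = 1) ∧
    (Q i j - Q i (j - 1) = 0 ∨ Q i j - Q i (j - 1) = 1))

/-- Concordance (entrywise) order on Lₙ × Lₙ. -/
def QCLe (n : ℕ) (P Q : ℕ → ℕ → ℤ) : Prop :=
  ∀ i ≤ n, ∀ j ≤ n, P i j ≤ Q i j

/-!
Taking minima preserves the boundary values, since both copulas agree there, and it preserves
steps in `{0, 1}`: if `a - a'` and `b - b'` both lie in `{0, 1}`, then so does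
`min a b - min a' b'`.
-/

theorem min_sub_min_eq_zero_or_one {a a' b b' : ℤ}
    (ha : a - a' = 0 ∨ a - a' = 1) (hb : b - b' = 0 ∨ b - b' = 1) :
    min a b - min a' b' = 0 ∨ min a b - min a' b' = 1 := by
  omega

theorem IsQuasiCopula.min {n : ℕ} {P Q : ℕ → ℕ → ℤ}
    (hP : IsQuasiCopula n P) (hQ : IsQuasiCopula n Q) :
    IsQuasiCopula n (fun i j => min (P i j) (Q i j)) := by
  obtain ⟨hPb, hPd⟩ := hP
  obtain ⟨hQb, hQd⟩ := hQ
  refine ⟨fun i hi => ?_, fun i hi1 hi2 j hj1 hj2 => ?_⟩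
  · obtain ⟨hP0, hP0', hPn, hPn'⟩ := hPb i hi
    obtain ⟨hQ0, hQ0', hQn, hQn'⟩ := hQb i hi
    simp only [hP0, hP0', hPn, hPn', hQ0, hQ0', hQn, hQn', min_self, and_self]
  · obtain ⟨hProw, hPcol⟩ := hPd i hi1 hi2 j hj1 hj2
    obtain ⟨hQrow, hQcol⟩ := hQd i hi1 hi2 j hj1 hj2
    exact ⟨min_sub_min_eq_zero_or_one hProw hQrow, min_sub_min_eq_zero_or_one hPcol hQcol⟩

theorem QCLe.min_left (n : ℕ) (P Q : ℕ → ℕ → ℤ) :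
    QCLe n (fun i j => min (P i j) (Q i j)) P :=
  fun _ _ _ _ => min_le_left _ _

theorem QCLe.min_right (n : ℕ) (P Q : ℕ → ℕ → ℤ) :
    QCLe n (fun i j => min (P i j) (Q i j)) Q :=
  fun _ _ _ _ => min_le_right _ _

theorem QCLe.le_min {n : ℕ} {S P Q : ℕ → ℕ → ℤ} (hSP : QCLe n S P) (hSQ : QCLe n S Q) :
    QCLe n S (fun i j => min (P i j) (Q i j)) :=
  fun i hi j hj => _root_.le_min (hSP i hi j hj) (hSQ i hi j hj)

/-- The pointwise minimum of two irreducible discrete quasi-copulas is again an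
irreducible discrete quasi-copula, and it is their meet in concordance order. -/
theorem min_quasiCopula (n : ℕ) (P Q : ℕ → ℕ → ℤ)
    (hP : IsQuasiCopula n P) (hQ : IsQuasiCopula n Q) :
    IsQuasiCopula n (fun i j => min (P i j) (Q i j)) ∧
    QCLe n (fun i j => min (P i j) (Q i j)) P ∧
    QCLe n (fun i j => min (P i j) (Q i j)) Q ∧
    ∀ S : ℕ → ℕ → ℤ, IsQuasiCopula n S → QCLe n S P → QCLe n S Q →
      QCLe n S (fun i j => min (P i j) (Q i j)) :=
  ⟨hP.min hQ, QCLe.min_left n P Q, QCLe.min_right n P Q, fun _ _ hSP hSQ => hSP.le_min hSQ⟩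
end

section
/- The set Q_n of irreducible discrete quasi-copulas on L_n, ordered entrywise, is a lattice: any two elements have a meet (pointwise min) and a join (pointwise max). -/
/-! Boundary values and unit steps survive any idempotent binary operation that sends two
steps in `{0, 1}` to a step in `{0, 1}`, and `min` and `max` are such operations. -/

def IsUnitStep (a' a : ℤ) : Prop := a - a' = 0 ∨ a - a' = 1

theorem IsUnitStep.min {a a' b b' : ℤ} (ha : IsUnitStep a' a) (hb : IsUnitStep b' b) :
    IsUnitStep (min a' b') (min a b) := by
  unfold IsUnitStep at *; omega

theorem IsUnitStep.max {a a' b b' : ℤ} (ha : IsUnitStep a' a) (hb : IsUnitStep b' b) :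
    IsUnitStep (max a' b') (max a b) := by
  unfold IsUnitStep at *; omega

theorem IsQuasiCopula.map₂ {n : ℕ} {P Q : ℕ → ℕ → ℤ} (f : ℤ → ℤ → ℤ)
    (hf_self : ∀ c, f c c = c)
    (hf_step : ∀ {a a' b b'}, IsUnitStep a' a → IsUnitStep b' b → IsUnitStep (f a' b') (f a b))
    (hP : IsQuasiCopula n P) (hQ : IsQuasiCopula n Q) :
    IsQuasiCopula n (fun i j => f (P i j) (Q i j)) := by
  obtain ⟨hPb, hPd⟩ := hP
  obtain ⟨hQb, hQd⟩ := hQ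
  refine ⟨fun i hi => ?_, fun i hi1 hin j hj1 hjn => ?_⟩
  · obtain ⟨p₁, p₂, p₃, p₄⟩ := hPb i hi
    obtain ⟨q₁, q₂, q₃, q₄⟩ := hQb i hi
    simp only [p₁, p₂, p₃, p₄, q₁, q₂, q₃, q₄, hf_self, and_self]
  · obtain ⟨p_row, p_col⟩ := hPd i hi1 hin j hj1 hjn
    obtain ⟨q_row, q_col⟩ := hQd i hi1 hin j hj1 hjn
    exact ⟨hf_step p_row q_row, hf_step p_col q_col⟩

/-- Q_n is a lattice: any two irreducible discrete quasi-copulas have a meet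
(pointwise min) and a join (pointwise max) in concordance order. -/
theorem quasiCopulas_lattice (n : ℕ) (P Q : ℕ → ℕ → ℤ)
    (hP : IsQuasiCopula n P) (hQ : IsQuasiCopula n Q) :
    (IsQuasiCopula n (fun i j => min (P i j) (Q i j)) ∧
      QCLe n (fun i j => min (P i j) (Q i j)) P ∧
      QCLe n (fun i j => min (P i j) (Q i j)) Q ∧
      ∀ S : ℕ → ℕ → ℤ, IsQuasiCopula n S → QCLe n S P → QCLe n S Q →
        QCLe n S (fun i j => min (P i j) (Q i j))) ∧
    (IsQuasiCopula n (fun i j => max (P i j) (Q i j)) ∧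
      QCLe n P (fun i j => max (P i j) (Q i j)) ∧
      QCLe n Q (fun i j => max (P i j) (Q i j)) ∧
      ∀ S : ℕ → ℕ → ℤ, IsQuasiCopula n S → QCLe n P S → QCLe n Q S →
        QCLe n (fun i j => max (P i j) (Q i j)) S) :=
  ⟨⟨hP.map₂ min min_self IsUnitStep.min hQ,
      fun _ _ _ _ => min_le_left _ _,
      fun _ _ _ _ => min_le_right _ _,
      fun _ _ hSP hSQ i hi j hj => le_min (hSP i hi j hj) (hSQ i hi j hj)⟩,
    ⟨hP.map₂ max max_self IsUnitStep.max hQ,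
      fun _ _ _ _ => le_max_left _ _,
      fun _ _ _ _ => le_max_right _ _,
      fun _ _ hPS hQS i hi j hj => max_le (hPS i hi j hj) (hQS i hi j hj)⟩⟩
end

section
/- A binary operation C on {0,…,n} is an irreducible discrete copula if and only if there exists a unique n×n permutation matrix A = (a_{ij}) such that C(r,s) = Σ_{i≤r, j≤s} a_{ij} for r,s ≥ 1 and C(r,0) = C(0,s) = 0; moreover then a_{ij} = C(i,j) + C(i−1,j−1) − C(i,j−1) − C(i−1,j). -/
/-
A permutation matrix `A` is recovered from its partial-sum function `C` as the mixed second
difference `C(i,j) + C(i-1,j-1) - C(i,j-1) - C(i-1,j)`, and conversely. For a copula these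
differences are nonnegative by 2-increasingness, and the boundary conditions make every row and
every column of them sum to `i - (i-1) = 1`, so they form a nonnegative integer matrix with unit
line sums, i.e. a permutation matrix. For a permutation matrix, the partial sums are 2-increasing
because the entries are nonnegative, and lie in `[0, r]` because each row sums to one.
-/

/-- An irreducible discrete copula on Lₙ = {0,…,n}: boundary conditions,
the 2-increasing property, and range contained in {0,…,n} (with integer
values, so that the range is exactly Lₙ).  Values at arguments outside
{0,…,n} are irrelevant. -/
def IsIrrCopula (n : ℕ) (C : ℕ → ℕ → ℤ) : Prop :=
  (∀ i ≤ n, C i 0 = 0 ∧ C 0 i = 0 ∧ C i n = i ∧ C n i = i) ∧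
  (∀ i i', i ≤ i' → i' ≤ n → ∀ j j', j ≤ j' → j' ≤ n →
    C i j' + C i' j ≤ C i j + C i' j') ∧
  (∀ i ≤ n, ∀ j ≤ n, ∃ k : ℕ, k ≤ n ∧ C i j = k)

/-- An n×n permutation matrix (indexed by [n]×[n], zero elsewhere). -/
def IsPermMatrix (n : ℕ) (A : ℕ → ℕ → ℤ) : Prop :=
  (∀ i j, (i ∉ Finset.Icc 1 n ∨ j ∉ Finset.Icc 1 n) → A i j = 0) ∧
  (∀ i ∈ Finset.Icc 1 n, ∀ j ∈ Finset.Icc 1 n, A i j = 0 ∨ A i j = 1) ∧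
  (∀ i ∈ Finset.Icc 1 n, ∑ j ∈ Finset.Icc 1 n, A i j = 1) ∧
  (∀ j ∈ Finset.Icc 1 n, ∑ i ∈ Finset.Icc 1 n, A i j = 1)

open Finset

def cumSum (A : ℕ → ℕ → ℤ) (r s : ℕ) : ℤ :=
  ∑ i ∈ Icc 1 r, ∑ j ∈ Icc 1 s, A i j

def mixedDiff (C : ℕ → ℕ → ℤ) (i j : ℕ) : ℤ :=
  C i j + C (i - 1) (j - 1) - C i (j - 1) - C (i - 1) j

def copulaMatrix (n : ℕ) (C : ℕ → ℕ → ℤ) (i j : ℕ) : ℤ :=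
  if i ∈ Icc 1 n ∧ j ∈ Icc 1 n then mixedDiff C i j else 0

lemma sum_Icc_one_sub_pred (g : ℕ → ℤ) (s : ℕ) :
    ∑ j ∈ Icc 1 s, (g j - g (j - 1)) = g s - g 0 := by
  induction s with
  | zero => simp
  | succ s ih =>
    rw [sum_Icc_succ_top (by omega), ih, Nat.add_sub_cancel]
    ring

lemma sum_Icc_one_add_sum_Ioc (f : ℕ → ℤ) {a b : ℕ} (hab : a ≤ b) :
    ∑ i ∈ Icc 1 a, f i + ∑ i ∈ Ioc a b, f i = ∑ i ∈ Icc 1 b, f i := by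
  simpa only [← Icc_add_one_left_eq_Ioc, zero_add] using sum_Ioc_consecutive f (Nat.zero_le a) hab

lemma sum_mixedDiff_row (C : ℕ → ℕ → ℤ) (i s : ℕ) :
    ∑ j ∈ Icc 1 s, mixedDiff C i j = (C i s - C i 0) - (C (i - 1) s - C (i - 1) 0) := by
  calc ∑ j ∈ Icc 1 s, mixedDiff C i j
      = ∑ j ∈ Icc 1 s, ((C i j - C (i - 1) j) - (C i (j - 1) - C (i - 1) (j - 1))) :=
        sum_congr rfl fun j _ ↦ by unfold mixedDiff; ring
    _ = _ := by rw [sum_Icc_one_sub_pred (fun j ↦ C i j - C (i - 1) j)]; ring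

lemma sum_mixedDiff_col (C : ℕ → ℕ → ℤ) (r j : ℕ) :
    ∑ i ∈ Icc 1 r, mixedDiff C i j = (C r j - C 0 j) - (C r (j - 1) - C 0 (j - 1)) := by
  calc ∑ i ∈ Icc 1 r, mixedDiff C i j
      = ∑ i ∈ Icc 1 r, ((C i j - C i (j - 1)) - (C (i - 1) j - C (i - 1) (j - 1))) :=
        sum_congr rfl fun i _ ↦ by unfold mixedDiff; ring
    _ = _ := by rw [sum_Icc_one_sub_pred (fun i ↦ C i j - C i (j - 1))]; ring

lemma cumSum_mixedDiff (C : ℕ → ℕ → ℤ) (r s : ℕ) :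
    cumSum (mixedDiff C) r s = C r s - C r 0 - C 0 s + C 0 0 := by
  simp only [cumSum, sum_mixedDiff_row]
  rw [sum_Icc_one_sub_pred (fun i ↦ C i s - C i 0)]
  ring

lemma cumSum_zero_left (A : ℕ → ℕ → ℤ) (s : ℕ) : cumSum A 0 s = 0 := by
  simp [cumSum]

lemma cumSum_zero_right (A : ℕ → ℕ → ℤ) (r : ℕ) : cumSum A r 0 = 0 := by
  simp [cumSum]

lemma cumSum_two_increasing {A : ℕ → ℕ → ℤ} (hA : ∀ i j, 0 ≤ A i j) {i i' j j' : ℕ}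
    (hii' : i ≤ i') (hjj' : j ≤ j') :
    cumSum A i j' + cumSum A i' j ≤ cumSum A i j + cumSum A i' j' := by
  unfold cumSum
  rw [← sum_Icc_one_add_sum_Ioc _ hii', ← sum_Icc_one_add_sum_Ioc _ hii']
  have : ∑ k ∈ Ioc i i', ∑ l ∈ Icc 1 j, A k l ≤ ∑ k ∈ Ioc i i', ∑ l ∈ Icc 1 j', A k l :=
    sum_le_sum fun k _ ↦
      sum_le_sum_of_subset_of_nonneg (Icc_subset_Icc_right hjj') fun l _ _ ↦ hA k l
  linarith

lemma cumSum_mono_right {A : ℕ → ℕ → ℤ} (hA : ∀ i j, 0 ≤ A i j) (i : ℕ) {j j' : ℕ}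
    (hjj' : j ≤ j') : cumSum A i j ≤ cumSum A i j' := by
  have := cumSum_two_increasing hA (Nat.zero_le i) hjj'
  rwa [cumSum_zero_left, cumSum_zero_left, zero_add, zero_add] at this

lemma copulaMatrix_of_mem {n : ℕ} (C : ℕ → ℕ → ℤ) {i j : ℕ} (hi : i ∈ Icc 1 n)
    (hj : j ∈ Icc 1 n) : copulaMatrix n C i j = mixedDiff C i j :=
  if_pos ⟨hi, hj⟩

lemma eq_copulaMatrix {n : ℕ} {C A : ℕ → ℕ → ℤ}
    (hout : ∀ i j, (i ∉ Icc 1 n ∨ j ∉ Icc 1 n) → A i j = 0)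
    (hin : ∀ i, 1 ≤ i → i ≤ n → ∀ j, 1 ≤ j → j ≤ n → A i j = mixedDiff C i j) :
    A = copulaMatrix n C := by
  funext i j
  by_cases h : i ∈ Icc 1 n ∧ j ∈ Icc 1 n
  · rw [copulaMatrix_of_mem C h.1 h.2]
    simp only [mem_Icc] at h
    exact hin i h.1.1 h.1.2 j h.2.1 h.2.2
  · rw [copulaMatrix, if_neg h, hout i j (not_and_or.mp h)]

namespace IsIrrCopula

variable {n : ℕ} {C : ℕ → ℕ → ℤ}

lemma mixedDiff_nonneg (hC : IsIrrCopula n C) {i j : ℕ} (hi : i ∈ Icc 1 n)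
    (hj : j ∈ Icc 1 n) : 0 ≤ mixedDiff C i j := by
  simp only [mem_Icc] at hi hj
  have := hC.2.1 (i - 1) i (by omega) hi.2 (j - 1) j (by omega) hj.2
  unfold mixedDiff
  linarith

lemma copulaMatrix_nonneg (hC : IsIrrCopula n C) (i j : ℕ) : 0 ≤ copulaMatrix n C i j := by
  unfold copulaMatrix
  split_ifs with h
  · exact hC.mixedDiff_nonneg h.1 h.2
  · exact le_rfl

lemma sum_copulaMatrix_row (hC : IsIrrCopula n C) {i : ℕ} (hi : i ∈ Icc 1 n) :
    ∑ j ∈ Icc 1 n, copulaMatrix n C i j = 1 := by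
  rw [sum_congr rfl fun j hj ↦ copulaMatrix_of_mem C hi hj, sum_mixedDiff_row]
  simp only [mem_Icc] at hi
  obtain ⟨h0, -, hn, -⟩ := hC.1 i hi.2
  obtain ⟨h0', -, hn', -⟩ := hC.1 (i - 1) (by omega)
  rw [h0, h0', hn, hn', Nat.cast_pred hi.1]
  ring

lemma sum_copulaMatrix_col (hC : IsIrrCopula n C) {j : ℕ} (hj : j ∈ Icc 1 n) :
    ∑ i ∈ Icc 1 n, copulaMatrix n C i j = 1 := by
  rw [sum_congr rfl fun i hi ↦ copulaMatrix_of_mem C hi hj, sum_mixedDiff_col]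
  simp only [mem_Icc] at hj
  obtain ⟨-, h0, -, hn⟩ := hC.1 j hj.2
  obtain ⟨-, h0', -, hn'⟩ := hC.1 (j - 1) (by omega)
  rw [h0, h0', hn, hn', Nat.cast_pred hj.1]
  ring

lemma copulaMatrix_isPermMatrix (hC : IsIrrCopula n C) : IsPermMatrix n (copulaMatrix n C) := by
  refine ⟨fun i j h ↦ if_neg (not_and_or.mpr h), fun i hi j hj ↦ ?_,
    fun i hi ↦ hC.sum_copulaMatrix_row hi, fun j hj ↦ hC.sum_copulaMatrix_col hj⟩
  have hle : copulaMatrix n C i j ≤ 1 :=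
    hC.sum_copulaMatrix_row hi ▸ single_le_sum (fun k _ ↦ hC.copulaMatrix_nonneg i k) hj
  have := hC.copulaMatrix_nonneg i j
  omega

lemma eq_cumSum_copulaMatrix (hC : IsIrrCopula n C) {r s : ℕ} (hr : r ≤ n) (hs : s ≤ n) :
    C r s = cumSum (copulaMatrix n C) r s := by
  have hbox : cumSum (copulaMatrix n C) r s = cumSum (mixedDiff C) r s :=
    sum_congr rfl fun i hi ↦ sum_congr rfl fun j hj ↦ copulaMatrix_of_mem C
      (Icc_subset_Icc_right hr hi) (Icc_subset_Icc_right hs hj)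
  rw [hbox, cumSum_mixedDiff, (hC.1 r hr).1, (hC.1 s hs).2.1, (hC.1 0 (Nat.zero_le n)).1]
  ring

lemma of_eqOn (hC : IsIrrCopula n C) {C' : ℕ → ℕ → ℤ}
    (h : ∀ r ≤ n, ∀ s ≤ n, C r s = C' r s) : IsIrrCopula n C' := by
  obtain ⟨hbd, hinc, hrange⟩ := hC
  refine ⟨fun i hi ↦ ?_, fun i i' hii' hi' j j' hjj' hj' ↦ ?_, fun i hi j hj ↦ ?_⟩
  · simp only [← h i hi _ (Nat.zero_le n), ← h _ (Nat.zero_le n) i hi, ← h i hi n le_rfl,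
      ← h n le_rfl i hi]
    exact hbd i hi
  · rw [← h i (hii'.trans hi') j' hj', ← h i' hi' j (hjj'.trans hj'),
      ← h i (hii'.trans hi') j (hjj'.trans hj'), ← h i' hi' j' hj']
    exact hinc i i' hii' hi' j j' hjj' hj'
  · rw [← h i hi j hj]
    exact hrange i hi j hj

end IsIrrCopula

namespace IsPermMatrix

variable {n : ℕ} {A : ℕ → ℕ → ℤ}

lemma nonneg (hA : IsPermMatrix n A) (i j : ℕ) : 0 ≤ A i j := by
  by_cases h : i ∈ Icc 1 n ∧ j ∈ Icc 1 n
  · rcases hA.2.1 i h.1 j h.2 with h | h <;> simp [h]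
  · rw [hA.1 i j (not_and_or.mp h)]

lemma cumSum_right_eq (hA : IsPermMatrix n A) {r : ℕ} (hr : r ≤ n) : cumSum A r n = r := by
  rw [cumSum, sum_congr rfl fun i hi ↦ hA.2.2.1 i (Icc_subset_Icc_right hr hi)]
  simp

lemma cumSum_top_eq (hA : IsPermMatrix n A) {s : ℕ} (hs : s ≤ n) : cumSum A n s = s := by
  rw [cumSum, sum_comm, sum_congr rfl fun j hj ↦ hA.2.2.2 j (Icc_subset_Icc_right hs hj)]
  simp

lemma isIrrCopula_cumSum (hA : IsPermMatrix n A) : IsIrrCopula n (cumSum A) := by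
  refine ⟨fun i hi ↦ ⟨cumSum_zero_right A i, cumSum_zero_left A i, hA.cumSum_right_eq hi,
    hA.cumSum_top_eq hi⟩, fun i i' hii' _ j j' hjj' _ ↦ cumSum_two_increasing hA.nonneg hii' hjj',
    fun i hi j hj ↦ ?_⟩
  have hlo := cumSum_zero_right A i ▸ cumSum_mono_right hA.nonneg i (Nat.zero_le j)
  have hhi := hA.cumSum_right_eq hi ▸ cumSum_mono_right hA.nonneg i hj
  exact ⟨(cumSum A i j).toNat, by omega, by omega⟩

end IsPermMatrix

theorem irrCopula_iff_permMatrix_general (n : ℕ) (C : ℕ → ℕ → ℤ) :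
    IsIrrCopula n C ↔
    ∃! A : ℕ → ℕ → ℤ, IsPermMatrix n A ∧
      (∀ r ≤ n, ∀ s ≤ n,
        C r s = ∑ i ∈ Finset.Icc 1 r, ∑ j ∈ Finset.Icc 1 s, A i j) ∧
      (∀ i, 1 ≤ i → i ≤ n → ∀ j, 1 ≤ j → j ≤ n →
        A i j = C i j + C (i - 1) (j - 1) - C i (j - 1) - C (i - 1) j) := by
  constructor
  · intro hC
    refine ⟨copulaMatrix n C, ⟨hC.copulaMatrix_isPermMatrix,
      fun r hr s hs ↦ hC.eq_cumSum_copulaMatrix hr hs,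
      fun i hi1 hin j hj1 hjn ↦ copulaMatrix_of_mem C (mem_Icc.mpr ⟨hi1, hin⟩)
        (mem_Icc.mpr ⟨hj1, hjn⟩)⟩, ?_⟩
    rintro A ⟨hA, -, hdiff⟩
    exact eq_copulaMatrix hA.1 hdiff
  · rintro ⟨A, ⟨hA, hC, -⟩, -⟩
    exact hA.isIrrCopula_cumSum.of_eqOn fun r hr s hs ↦ (hC r hr s hs).symm

/-- C is an irreducible discrete copula iff there is a unique permutation
matrix A whose partial sums give C; moreover then
a_{ij} = C(i,j) + C(i−1,j−1) − C(i,j−1) − C(i−1,j). -/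
theorem irrCopula_iff_permMatrix (n : ℕ) (hn : 1 ≤ n) (C : ℕ → ℕ → ℤ) :
    IsIrrCopula n C ↔
    ∃! A : ℕ → ℕ → ℤ, IsPermMatrix n A ∧
      (∀ r ≤ n, ∀ s ≤ n,
        C r s = ∑ i ∈ Finset.Icc 1 r, ∑ j ∈ Finset.Icc 1 s, A i j) ∧
      (∀ i, 1 ≤ i → i ≤ n → ∀ j, 1 ≤ j → j ≤ n →
        A i j = C i j + C (i - 1) (j - 1) - C i (j - 1) - C (i - 1) j) :=
  irrCopula_iff_permMatrix_general n C
end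

section
/- The poset of irreducible discrete copulas on L_n under concordance order is isomorphic to the symmetric group S_n under reverse Bruhat order. -/
/-- w(r,s) = |{i ≤ r : w(i) ≤ s}|, the partial-sum matrix of w. -/
def wrs (w : Equiv.Perm ℕ) (r s : ℕ) : ℕ :=
  ((Finset.Icc 1 r).filter (fun i => w i ≤ s)).card

/-- Reverse Bruhat order on Sₙ: v ≤' w iff v(r,s) ≤ w(r,s) for all r,s. -/
def RevBruhat (n : ℕ) (v w : Equiv.Perm ℕ) : Prop :=
  ∀ r ≤ n, ∀ s ≤ n, wrs v r s ≤ wrs w r s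

/-!
Row `k` of the partial-sum matrix `(r, s) ↦ w(r, s)` of a permutation exceeds row `k - 1` by the
indicator of `w k ≤ s`. Conversely, for an irreducible discrete copula `C` the 2-increasing
property makes each row difference `C k · - C (k - 1) ·` monotone, and the boundary conditions
make it rise from `0` to `1`: it is a unit step at some column `σ k`. Telescoping the rows gives
`C r s = #{k ≤ r | σ k ≤ s}`, and the boundary condition `C n s = s` forces `σ` to permute
`{1, …, n}`. Hence `w ↦ w(·, ·)` is a bijection onto the copulas, and it is an order isomorphism
because the reverse Bruhat order is by definition the entrywise order of these matrices.
-/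

open Finset

theorem card_filter_Icc_one_add_one (p : ℕ → Prop) [DecidablePred p] (r : ℕ) :
    #{k ∈ Icc 1 (r + 1) | p k} = #{k ∈ Icc 1 r | p k} + if p (r + 1) then 1 else 0 := by
  rw [← insert_Icc_right_eq_Icc_add_one (by omega), filter_insert]
  split_ifs
  · exact card_insert_of_notMem (by simp)
  · rfl

theorem eq_card_filter_of_forall_add_one {a : ℕ → ℤ} {p : ℕ → Prop} [DecidablePred p] {r : ℕ}
    (h0 : a 0 = 0) (hstep : ∀ k < r, a (k + 1) = a k + if p (k + 1) then 1 else 0) :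
    a r = #{k ∈ Icc 1 r | p k} := by
  induction r with
  | zero => simp [h0]
  | succ r ih =>
    rw [hstep r r.lt_add_one, ih fun k hk => hstep k (by omega), card_filter_Icc_one_add_one]
    split_ifs <;> simp

theorem bijOn_Icc_of_card_filter_le_eq {n : ℕ} {f : ℕ → ℕ}
    (h : ∀ s ≤ n, #{k ∈ Icc 1 n | f k ≤ s} = s) :
    Set.BijOn f ↑(Icc 1 n) ↑(Icc 1 n) := by
  have hmaps : Set.MapsTo f ↑(Icc 1 n) ↑(Icc 1 n) := by
    intro k hk
    have hle : f k ≤ n := card_filter_eq_iff.1 (by rw [h n le_rfl, Nat.card_Icc]; omega) k hk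
    have hpos : ¬ f k ≤ 0 := card_filter_eq_zero_iff.1 (h 0 (Nat.zero_le n)) k hk
    simp only [coe_Icc, Set.mem_Icc]
    omega
  refine ((Icc 1 n).finite_toSet.surjOn_iff_bijOn_of_mapsTo hmaps).1 fun s hs => ?_
  simp only [coe_Icc, Set.mem_Icc] at hs
  obtain ⟨k, hk, hk'⟩ := exists_mem_notMem_of_card_lt_card
    (s := {k ∈ Icc 1 n | f k ≤ s - 1}) (t := {k ∈ Icc 1 n | f k ≤ s})
    (by rw [h s hs.2, h (s - 1) (by omega)]; omega)
  simp only [mem_filter, not_and] at hk hk'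
  exact ⟨k, mem_coe.2 hk.1, by have := hk' hk.1; omega⟩

theorem exists_supported_eqOn {n : ℕ} {f : ℕ → ℕ}
    (hf : Set.BijOn f ↑(Icc 1 n) ↑(Icc 1 n)) :
    ∃ w : Equiv.Perm ℕ, Supported n w ∧ Set.EqOn w f ↑(Icc 1 n) := by
  classical
  refine ⟨Equiv.Perm.ofSubtype (hf.equiv f), fun k hk => ?_, fun k hk => ?_⟩
  · by_contra hk'
    exact hk (Equiv.Perm.ofSubtype_apply_of_not_mem _ (by simpa using hk'))
  · rw [Equiv.Perm.ofSubtype_apply_of_mem _ hk]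
    rfl

section Permutation

variable {n : ℕ} {v w : Equiv.Perm ℕ}

theorem Supported.apply_eq_self (hw : Supported n w) {k : ℕ} (hk : k ∉ Icc 1 n) : w k = k :=
  not_not.1 fun h => hk (hw k h)

theorem Supported.apply_mem_Icc_iff (hw : Supported n w) {k : ℕ} :
    w k ∈ Icc 1 n ↔ k ∈ Icc 1 n := by
  constructor
  · intro h
    by_contra hk
    rw [hw.apply_eq_self hk] at h
    exact hk h
  · intro hk
    by_contra h
    rw [w.injective (hw.apply_eq_self h)] at h
    exact h hk

theorem wrs_zero_left (w : Equiv.Perm ℕ) (s : ℕ) : wrs w 0 s = 0 := by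
  simp [wrs]

theorem wrs_add_one (w : Equiv.Perm ℕ) (r s : ℕ) :
    wrs w (r + 1) s = wrs w r s + if w (r + 1) ≤ s then 1 else 0 :=
  card_filter_Icc_one_add_one _ r

theorem wrs_le_left (w : Equiv.Perm ℕ) (r s : ℕ) : wrs w r s ≤ r :=
  (card_filter_le _ _).trans (by simp)

theorem wrs_add_wrs_le (w : Equiv.Perm ℕ) {i i' j j' : ℕ} (hi : i ≤ i') (hj : j ≤ j') :
    wrs w i j' + wrs w i' j ≤ wrs w i j + wrs w i' j' := by
  induction i', hi using Nat.le_induction with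
  | base => omega
  | succ m _ ih =>
    rw [wrs_add_one, wrs_add_one]
    split_ifs <;> omega

theorem Supported.wrs_zero_right (hw : Supported n w) (r : ℕ) : wrs w r 0 = 0 := by
  refine card_filter_eq_zero_iff.2 fun k hk hk0 => ?_
  have : w k = w 0 := by rw [hw.apply_eq_self (by simp : 0 ∉ Icc 1 n)]; omega
  simp [w.injective this] at hk

theorem Supported.wrs_right_eq (hw : Supported n w) {r : ℕ} (hr : r ≤ n) : wrs w r n = r := by
  rw [wrs, filter_true_of_mem, Nat.card_Icc, Nat.add_sub_cancel]
  intro k hk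
  exact (mem_Icc.1 (hw.apply_mem_Icc_iff.2 (Icc_subset_Icc_right hr hk))).2

theorem Supported.wrs_left_eq (hw : Supported n w) {s : ℕ} (hs : s ≤ n) : wrs w n s = s := by
  have : {k ∈ Icc 1 n | w k ≤ s} = (Icc 1 s).map w.symm.toEmbedding := by
    ext k
    rw [mem_map_equiv, mem_filter, ← hw.apply_mem_Icc_iff]
    simp only [Equiv.symm_symm, mem_Icc]
    omega
  rw [wrs, this, card_map, Nat.card_Icc, Nat.add_sub_cancel]

theorem Supported.eq_of_wrs_eq (hv : Supported n v) (hw : Supported n w)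
    (h : ∀ r ≤ n, ∀ s ≤ n, wrs v r s = wrs w r s) : v = w := by
  ext k
  by_cases hk : k ∈ Icc 1 n
  · obtain ⟨m, rfl⟩ : ∃ m, k = m + 1 := Nat.exists_eq_add_one.2 (mem_Icc.1 hk).1
    have hmn : m + 1 ≤ n := (mem_Icc.1 hk).2
    have hle : ∀ s ≤ n, v (m + 1) ≤ s ↔ w (m + 1) ≤ s := by
      intro s hs
      have hrow := h (m + 1) hmn s hs
      rw [wrs_add_one, wrs_add_one, h m (by omega) s hs] at hrow
      split_ifs at hrow <;> constructor <;> intro <;> omega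
    have hvn := (mem_Icc.1 (hv.apply_mem_Icc_iff.2 hk)).2
    have hwn := (mem_Icc.1 (hw.apply_mem_Icc_iff.2 hk)).2
    exact le_antisymm ((hle _ hwn).2 le_rfl) ((hle _ hvn).1 le_rfl)
  · rw [hv.apply_eq_self hk, hw.apply_eq_self hk]

end Permutation

def copulaOf (n : ℕ) (w : Equiv.Perm ℕ) (i j : ℕ) : ℤ :=
  if i ≤ n ∧ j ≤ n then wrs w i j else 0

section CopulaOf

variable {n i j : ℕ} {w : Equiv.Perm ℕ}

theorem copulaOf_of_le (hi : i ≤ n) (hj : j ≤ n) : copulaOf n w i j = wrs w i j :=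
  if_pos ⟨hi, hj⟩

theorem copulaOf_of_lt (h : n < i ∨ n < j) : copulaOf n w i j = 0 :=
  if_neg (by omega)

theorem Supported.isIrrCopula_copulaOf (hw : Supported n w) : IsIrrCopula n (copulaOf n w) := by
  refine ⟨fun i hi => ?_, fun i i' hi hi' j j' hj hj' => ?_,
    fun i hi j hj => ⟨wrs w i j, (wrs_le_left w i j).trans hi, copulaOf_of_le hi hj⟩⟩
  · simp only [copulaOf_of_le hi le_rfl, copulaOf_of_le hi (Nat.zero_le n),
      copulaOf_of_le le_rfl hi, copulaOf_of_le (Nat.zero_le n) hi, hw.wrs_zero_right,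
      wrs_zero_left, hw.wrs_right_eq hi, hw.wrs_left_eq hi, Nat.cast_zero, and_self]
  · rw [copulaOf_of_le (hi.trans hi') hj', copulaOf_of_le hi' (hj.trans hj'),
      copulaOf_of_le (hi.trans hi') (hj.trans hj'), copulaOf_of_le hi' hj']
    exact_mod_cast wrs_add_wrs_le w hi hj

end CopulaOf

/-- The column `σ k` of the `1` in row `k` of the permutation matrix of an irreducible copula. -/
noncomputable def rowJump (C : ℕ → ℕ → ℤ) (k : ℕ) : ℕ :=
  sInf {j | C (k - 1) j < C k j}

section Copula

variable {n : ℕ} {C : ℕ → ℕ → ℤ}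

theorem IsIrrCopula.row_add_one (hC : IsIrrCopula n C) {k s : ℕ} (hk : k < n) (hs : s ≤ n) :
    C (k + 1) s = C k s + if rowJump C (k + 1) ≤ s then 1 else 0 := by
  obtain ⟨hbound, hinc, -⟩ := hC
  have hmono : ∀ j j', j ≤ j' → j' ≤ n → C (k + 1) j - C k j ≤ C (k + 1) j' - C k j' :=
    fun j j' hj hj' => by linarith [hinc k (k + 1) (by omega) hk j j' hj hj']
  have hzero : C (k + 1) 0 - C k 0 = 0 := by
    rw [(hbound _ hk).1, (hbound k hk.le).1, sub_zero]
  have htop : C (k + 1) n - C k n = 1 := by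
    rw [(hbound _ hk).2.2.1, (hbound k hk.le).2.2.1]
    push_cast
    ring
  simp only [rowJump, Nat.add_sub_cancel]
  split_ifs with hjump
  · have hmem : C k _ < C (k + 1) _ := Nat.sInf_mem (s := {j | C k j < C (k + 1) j})
      ⟨n, by simp only [Set.mem_ofPred_eq]; omega⟩
    have := hmono _ _ hjump hs
    have := hmono s n hs le_rfl
    omega
  · have hnot : ¬ C k s < C (k + 1) s := Nat.notMem_of_lt_sInf (not_le.1 hjump)
    have := hmono 0 s (Nat.zero_le s) hs
    omega

theorem IsIrrCopula.exists_supported_wrs_eq (hC : IsIrrCopula n C) :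
    ∃ w : Equiv.Perm ℕ, Supported n w ∧ ∀ r ≤ n, ∀ s ≤ n, (wrs w r s : ℤ) = C r s := by
  have hcount : ∀ r ≤ n, ∀ s ≤ n, C r s = #{k ∈ Icc 1 r | rowJump C k ≤ s} :=
    fun r hr s hs => eq_card_filter_of_forall_add_one (a := (C · s)) (hC.1 s hs).2.1
      fun k hk => hC.row_add_one (by omega) hs
  obtain ⟨w, hw, hwC⟩ := exists_supported_eqOn (bijOn_Icc_of_card_filter_le_eq fun s hs => by
    have := hcount n le_rfl s hs
    rw [(hC.1 s hs).2.2.2] at this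
    exact_mod_cast this.symm)
  refine ⟨w, hw, fun r hr s hs => ?_⟩
  rw [hcount r hr s hs, wrs,
    filter_congr fun k hk => by rw [hwC (mem_coe.2 (Icc_subset_Icc_right hr hk))]]

end Copula

/-- The poset of irreducible discrete copulas on Lₙ under concordance order is
isomorphic to Sₙ under reverse Bruhat order: there is a bijection from Sₙ onto
the irreducible discrete copulas (normalized to vanish outside Lₙ × Lₙ) which
is an order isomorphism. -/
theorem copulas_iso_revBruhat (n : ℕ) :
    ∃ f : {w : Equiv.Perm ℕ // Supported n w} →
        {C : ℕ → ℕ → ℤ // IsIrrCopula n C ∧ ∀ i j, (n < i ∨ n < j) → C i j = 0},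
      Function.Bijective f ∧
      ∀ v w : {w : Equiv.Perm ℕ // Supported n w},
        RevBruhat n v.1 w.1 ↔ ∀ i ≤ n, ∀ j ≤ n, (f v).1 i j ≤ (f w).1 i j := by
  refine ⟨fun w => ⟨copulaOf n w, w.2.isIrrCopula_copulaOf, fun i j h => copulaOf_of_lt h⟩,
    ⟨fun v w h => Subtype.ext (v.2.eq_of_wrs_eq w.2 fun r hr s hs => ?_),
      fun ⟨C, hC, hzero⟩ => ?_⟩, fun v w => ?_⟩
  · have := congrFun₂ (congrArg Subtype.val h) r s
    simpa [copulaOf_of_le hr hs] using this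
  · obtain ⟨w, hw, hwC⟩ := hC.exists_supported_wrs_eq
    refine ⟨⟨w, hw⟩, Subtype.ext (funext₂ fun i j => ?_)⟩
    by_cases h : i ≤ n ∧ j ≤ n
    · exact (copulaOf_of_le h.1 h.2).trans (hwC i h.1 j h.2)
    · exact (copulaOf_of_lt (by omega)).trans (hzero i j (by omega)).symm
  · simp +contextual only [RevBruhat, copulaOf_of_le, Nat.cast_le]
end
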